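/- If [∂_L∂_R P, P] = 0 (with P² = P smooth), then the functions J_L = tr(∂_L P ∂_L P P) and J_R = tr(∂_R P ∂_R P P) satisfy ∂_R J_L = 0 and ∂_L J_R = 0 after rewriting: equivalently, for X a solution of the Grassmannian sigma model equations with X†X = 1 and P = 1 - XX†, the currents J_L = tr(∂_L X ∂_L X† P) and J_R = tr(∂_R X ∂_R X† P) satisfy ∂_R J_L = 0 and ∂_L J_R = 0. -/

import Mathlib

open Matrix

attribute [local instance] Matrix.normedAddCommGroup Matrix.normedSpace

noncomputable def pL {α : Type*} [NormedAddCommGroup α] [NormedSpace ℝ α]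
    (f : ℝ × ℝ → α) : ℝ × ℝ → α := fun x => fderiv ℝ f x (1, 0)

noncomputable def pR {α : Type*} [NormedAddCommGroup α] [NormedSpace ℝ α]
    (f : ℝ × ℝ → α) : ℝ × ℝ → α := fun x => fderiv ℝ f x (0, 1)

section CLM
variable {ι₁ ι₂ ι₃ : Type*} [Fintype ι₁] [Fintype ι₂] [Fintype ι₃]

noncomputable def mulCLM : Matrix ι₁ ι₂ ℂ →L[ℝ] Matrix ι₂ ι₃ ℂ →L[ℝ] Matrix ι₁ ι₃ ℂ :=
  LinearMap.toContinuousLinearMap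
  { toFun := fun A => LinearMap.toContinuousLinearMap
      { toFun := fun B => A * B
        map_add' := fun B C => Matrix.mul_add A B C
        map_smul' := fun r B => (Matrix.mul_smul A r B) }
    map_add' := fun A B => by ext C; simp [Matrix.add_mul]
    map_smul' := fun r A => by ext C; simp [Matrix.smul_mul] }

@[simp] lemma mulCLM_apply (A : Matrix ι₁ ι₂ ℂ) (B : Matrix ι₂ ι₃ ℂ) :
    mulCLM A B = A * B := rfl

noncomputable def ctCLM : Matrix ι₁ ι₂ ℂ →L[ℝ] Matrix ι₂ ι₁ ℂ :=
  LinearMap.toContinuousLinearMap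
  { toFun := fun A => Aᴴ
    map_add' := fun A B => conjTranspose_add A B
    map_smul' := fun r A => by ext i j; simp }

@[simp] lemma ctCLM_apply (A : Matrix ι₁ ι₂ ℂ) : ctCLM A = Aᴴ := rfl

noncomputable def trCLM : Matrix ι₁ ι₁ ℂ →L[ℝ] ℂ :=
  LinearMap.toContinuousLinearMap ((Matrix.traceLinearMap ι₁ ℂ ℂ).restrictScalars ℝ)

@[simp] lemma trCLM_apply (A : Matrix ι₁ ι₁ ℂ) : trCLM A = Matrix.trace A := rfl
end CLM

section deriv
variable {ι₁ ι₂ ι₃ : Type*} [Fintype ι₁] [Fintype ι₂] [Fintype ι₃]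
variable {f : ℝ × ℝ → Matrix ι₁ ι₂ ℂ} {g : ℝ × ℝ → Matrix ι₂ ι₃ ℂ} {x v : ℝ × ℝ}

lemma ContDiff.matmul (hf : ContDiff ℝ (⊤ : ℕ∞) f) (hg : ContDiff ℝ (⊤ : ℕ∞) g) :
    ContDiff ℝ (⊤ : ℕ∞) fun y => f y * g y :=
  ((mulCLM (ι₁ := ι₁) (ι₂ := ι₂) (ι₃ := ι₃)).isBoundedBilinearMap.contDiff).comp (hf.prodMk hg)

lemma fderiv_matmul (hf : DifferentiableAt ℝ f x) (hg : DifferentiableAt ℝ g x) :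
    fderiv ℝ (fun y => f y * g y) x v = fderiv ℝ f x v * g x + f x * fderiv ℝ g x v := by
  have h := ((mulCLM (ι₁ := ι₁) (ι₂ := ι₂) (ι₃ := ι₃)).isBoundedBilinearMap.hasFDerivAt
      (f x, g x)).comp x (hf.hasFDerivAt.prodMk hg.hasFDerivAt)
  rw [show fderiv ℝ (fun y => f y * g y) x = _ from h.fderiv]
  exact add_comm _ _

lemma ContDiff.ct (hf : ContDiff ℝ (⊤ : ℕ∞) f) : ContDiff ℝ (⊤ : ℕ∞) fun y => (f y)ᴴ :=
  (ctCLM (ι₁ := ι₁) (ι₂ := ι₂)).contDiff.comp hf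

lemma fderiv_ct (hf : DifferentiableAt ℝ f x) :
    fderiv ℝ (fun y => (f y)ᴴ) x v = (fderiv ℝ f x v)ᴴ := by
  have h : HasFDerivAt (fun y => (f y)ᴴ) _ x :=
    (ctCLM (ι₁ := ι₁) (ι₂ := ι₂)).hasFDerivAt.comp x hf.hasFDerivAt
  rw [h.fderiv]; rfl

lemma fderiv_tr {f : ℝ × ℝ → Matrix ι₁ ι₁ ℂ} (hf : DifferentiableAt ℝ f x) :
    fderiv ℝ (fun y => Matrix.trace (f y)) x v = Matrix.trace (fderiv ℝ f x v) := by
  have h : HasFDerivAt (fun y => Matrix.trace (f y)) _ x :=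
    (trCLM (ι₁ := ι₁)).hasFDerivAt.comp x hf.hasFDerivAt
  rw [h.fderiv]; rfl
end deriv

section dirDeriv
variable {α : Type*} [NormedAddCommGroup α] [NormedSpace ℝ α]
variable {f : ℝ × ℝ → α} {x u w : ℝ × ℝ}

lemma ContDiff.dirDeriv (hf : ContDiff ℝ (⊤ : ℕ∞) f) (u : ℝ × ℝ) :
    ContDiff ℝ (⊤ : ℕ∞) (fun y => fderiv ℝ f y u) :=
  (ContinuousLinearMap.apply ℝ α u).contDiff.comp (hf.fderiv_right (by simp))

lemma fderiv_dirDeriv (hf : ContDiff ℝ (⊤ : ℕ∞) f) :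
    fderiv ℝ (fun y => fderiv ℝ f y u) x w = fderiv ℝ (fderiv ℝ f) x w u := by
  have h : HasFDerivAt (fun y => fderiv ℝ f y u) _ x :=
    (ContinuousLinearMap.apply ℝ α u).hasFDerivAt.comp x
      (((hf.fderiv_right (m := (⊤ : ℕ∞)) (by simp)).differentiable (by simp) x).hasFDerivAt)
  rw [h.fderiv]; rfl

lemma fderiv_swap (hf : ContDiff ℝ (⊤ : ℕ∞) f) (x u w : ℝ × ℝ) :
    fderiv ℝ (fun y => fderiv ℝ f y u) x w = fderiv ℝ (fun y => fderiv ℝ f y w) x u := by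
  rw [fderiv_dirDeriv hf, fderiv_dirDeriv hf]
  exact (hf.contDiffAt.isSymmSndFDerivAt (by rw [minSmoothness_of_isRCLikeNormedField]; exact WithTop.coe_le_coe.mpr (le_top : (2 : ℕ∞) ≤ ⊤))) w u
end dirDeriv

lemma trace_CA_zero {n : Type*} [Fintype n] {A C P : Matrix n n ℂ}
    (hA : A = A * P + P * A) (hp : P * P = P) (hc : C * P = P * C) :
    Matrix.trace (C * A) = 0 := by
  have key0 : Matrix.trace (P * (C * A)) = 0 := by
    have e2 : Matrix.trace (P * (C * A)) =
        Matrix.trace (P * (C * A)) + Matrix.trace (P * (C * A)) := by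
      nth_rewrite 1 [hA]
      rw [Matrix.mul_add, Matrix.mul_add, trace_add]
      congr 1
      · rw [← Matrix.mul_assoc, ← Matrix.mul_assoc, Matrix.trace_mul_comm,
          ← Matrix.mul_assoc, ← Matrix.mul_assoc, hp, Matrix.mul_assoc]
      · rw [← Matrix.mul_assoc, ← Matrix.mul_assoc, Matrix.mul_assoc P C P, hc,
          ← Matrix.mul_assoc, hp, Matrix.mul_assoc]
    linear_combination -e2
  have e1 : Matrix.trace (C * A) =
      Matrix.trace (P * (C * A)) + Matrix.trace (P * (C * A)) := by
    nth_rewrite 1 [hA]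
    rw [Matrix.mul_add, trace_add]
    congr 1
    · rw [← Matrix.mul_assoc, Matrix.trace_mul_comm]
    · rw [← Matrix.mul_assoc, hc, Matrix.mul_assoc]
  rw [e1, key0]; ring

lemma current_eq {N m : Type*} [Fintype N] [Fintype m] [DecidableEq N] [DecidableEq m]
    {X Y : Matrix N m ℂ} {A P : Matrix N N ℂ}
    (hX : Xᴴ * X = 1) (hYX : Yᴴ * X + Xᴴ * Y = 0) (hP : P = 1 - X * Xᴴ)
    (hA : A = -(Y * Xᴴ + X * Yᴴ)) :
    Matrix.trace (Y * Yᴴ * P) = (2⁻¹ : ℂ) * Matrix.trace (A * A) := by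
  have hXY : Xᴴ * Y = -(Yᴴ * X) := by rwa [add_comm, add_eq_zero_iff_eq_neg] at hYX
  have c1 : Matrix.trace (Y * Yᴴ * (X * Xᴴ)) = -Matrix.trace (Yᴴ * X * (Yᴴ * X)) := by
    simp only [Matrix.mul_assoc]
    rw [Matrix.trace_mul_comm Y (Yᴴ * (X * Xᴴ))]
    simp only [Matrix.mul_assoc]
    rw [hXY]
    simp [Matrix.mul_neg]
  have h5a : Matrix.trace (Y * Yᴴ * P) =
      Matrix.trace (Y * Yᴴ) + Matrix.trace (Yᴴ * X * (Yᴴ * X)) := by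
    rw [hP, Matrix.mul_sub, Matrix.mul_one, trace_sub, c1]; ring
  have t11 : Matrix.trace (Y * Xᴴ * (Y * Xᴴ)) = Matrix.trace (Yᴴ * X * (Yᴴ * X)) := by
    simp only [Matrix.mul_assoc]
    rw [Matrix.trace_mul_comm Y (Xᴴ * (Y * Xᴴ))]
    simp only [Matrix.mul_assoc]
    rw [← Matrix.mul_assoc Xᴴ Y (Xᴴ * Y), hXY]
    simp [Matrix.neg_mul, Matrix.mul_neg, Matrix.mul_assoc]
  have t12 : Matrix.trace (Y * Xᴴ * (X * Yᴴ)) = Matrix.trace (Y * Yᴴ) := by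
    simp only [Matrix.mul_assoc]
    rw [← Matrix.mul_assoc Xᴴ X Yᴴ, hX, Matrix.one_mul]
  have t21 : Matrix.trace (X * Yᴴ * (Y * Xᴴ)) = Matrix.trace (Y * Yᴴ) := by
    rw [Matrix.trace_mul_comm (X * Yᴴ) (Y * Xᴴ)]
    exact t12
  have t22 : Matrix.trace (X * Yᴴ * (X * Yᴴ)) = Matrix.trace (Yᴴ * X * (Yᴴ * X)) := by
    simp only [Matrix.mul_assoc]
    rw [Matrix.trace_mul_comm X (Yᴴ * (X * Yᴴ))]
    simp only [Matrix.mul_assoc]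
  have h5b : Matrix.trace (A * A) =
      2 * Matrix.trace (Y * Yᴴ) + 2 * Matrix.trace (Yᴴ * X * (Yᴴ * X)) := by
    rw [hA, Matrix.neg_mul, Matrix.mul_neg, neg_neg, Matrix.add_mul, Matrix.mul_add,
      Matrix.mul_add, trace_add, trace_add, trace_add, t11, t12, t21, t22]
    ring
  rw [h5a, h5b]; ring

section main
variable {N m : ℕ}

lemma conserved (X : ℝ × ℝ → Matrix (Fin N) (Fin m) ℂ)
    (hsmooth : ContDiff ℝ (⊤ : ℕ∞) X)
    (hX : ∀ x, (X x)ᴴ * X x = 1)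
    (P : ℝ × ℝ → Matrix (Fin N) (Fin N) ℂ)
    (hP : ∀ x, P x = 1 - X x * (X x)ᴴ)
    (u w : ℝ × ℝ)
    (hEL : ∀ x, fderiv ℝ (fun y => fderiv ℝ P y u) x w * P x
      = P x * fderiv ℝ (fun y => fderiv ℝ P y u) x w) (x : ℝ × ℝ) :
    fderiv ℝ (fun y => Matrix.trace (fderiv ℝ X y u * (fderiv ℝ X y u)ᴴ * P y)) x w = 0 := by
  -- smoothness facts
  have hPfun : P = fun z => 1 - X z * (X z)ᴴ := funext hP
  have hPsmooth : ContDiff ℝ (⊤ : ℕ∞) P := by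
    rw [hPfun]; exact contDiff_const.sub (hsmooth.matmul hsmooth.ct)
  have dX : Differentiable ℝ X := hsmooth.differentiable (by simp)
  have dXct : Differentiable ℝ (fun z => (X z)ᴴ) := hsmooth.ct.differentiable (by simp)
  have dP : Differentiable ℝ P := hPsmooth.differentiable (by simp)
  have hAsmooth : ContDiff ℝ (⊤ : ℕ∞) (fun y => fderiv ℝ P y u) := hPsmooth.dirDeriv u
  have dA : Differentiable ℝ (fun y => fderiv ℝ P y u) := hAsmooth.differentiable (by simp)
  have hYsmooth : ContDiff ℝ (⊤ : ℕ∞) (fun y => fderiv ℝ X y u) := hsmooth.dirDeriv u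
  -- pointwise facts
  have hYX : ∀ y, (fderiv ℝ X y u)ᴴ * X y + (X y)ᴴ * fderiv ℝ X y u = 0 := by
    intro y
    have hconst : (fun z => (X z)ᴴ * X z) = (fun _ : ℝ × ℝ => (1 : Matrix (Fin m) (Fin m) ℂ)) :=
      funext hX
    have h0 : fderiv ℝ (fun z => (X z)ᴴ * X z) y u = 0 := by
      rw [hconst, fderiv_fun_const]; rfl
    rw [fderiv_matmul (dXct y) (dX y), fderiv_ct (dX y)] at h0
    exact h0
  have hAeq : ∀ y, fderiv ℝ P y u
      = -(fderiv ℝ X y u * (X y)ᴴ + X y * (fderiv ℝ X y u)ᴴ) := by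
    intro y
    rw [hPfun, show fderiv ℝ (fun z => 1 - X z * (X z)ᴴ) y = -fderiv ℝ (fun z => X z * (X z)ᴴ) y
      from fderiv_const_sub _, ContinuousLinearMap.neg_apply,
      fderiv_matmul (dX y) (dXct y), fderiv_ct (dX y)]
  have hPP : ∀ y, P y * P y = P y := by
    intro y
    rw [hP y]
    have hq : (X y * (X y)ᴴ) * (X y * (X y)ᴴ) = X y * (X y)ᴴ := by
      rw [Matrix.mul_assoc, ← Matrix.mul_assoc (X y)ᴴ (X y) (X y)ᴴ, hX y, Matrix.one_mul]
    rw [Matrix.mul_sub, Matrix.mul_one, Matrix.sub_mul, Matrix.one_mul, hq]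
    abel
  have hArel : ∀ y, fderiv ℝ P y u
      = fderiv ℝ P y u * P y + P y * fderiv ℝ P y u := by
    intro y
    have hfun : (fun z => P z * P z) = P := funext hPP
    have h1 : fderiv ℝ (fun z => P z * P z) y u = fderiv ℝ P y u := by rw [hfun]
    rw [fderiv_matmul (dP y) (dP y)] at h1
    exact h1.symm
  -- rewrite the current
  have hfunJ : (fun y => Matrix.trace (fderiv ℝ X y u * (fderiv ℝ X y u)ᴴ * P y))
      = fun y => (2⁻¹ : ℂ) * Matrix.trace (fderiv ℝ P y u * fderiv ℝ P y u) := by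
    funext y
    exact current_eq (hX y) (hYX y) (hP y) (hAeq y)
  rw [hfunJ]
  have dtr : DifferentiableAt ℝ (fun y => Matrix.trace (fderiv ℝ P y u * fderiv ℝ P y u)) x := by
    exact ((trCLM.contDiff.comp (hAsmooth.matmul hAsmooth)).differentiable (by simp) x)
  rw [fderiv_const_mul dtr]
  have hderiv : fderiv ℝ (fun y => Matrix.trace (fderiv ℝ P y u * fderiv ℝ P y u)) x w = 0 := by
    rw [fderiv_tr ((hAsmooth.matmul hAsmooth).differentiable (by simp) x),
      fderiv_matmul (dA x) (dA x), trace_add]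
    have hCA : Matrix.trace (fderiv ℝ (fun y => fderiv ℝ P y u) x w * fderiv ℝ P x u) = 0 :=
      trace_CA_zero (hArel x) (hPP x) (hEL x)
    rw [hCA, Matrix.trace_mul_comm, hCA]
    ring
  rw [ContinuousLinearMap.smul_apply, hderiv]
  simp
end main

theorem stmt3 {N m : ℕ} (X : ℝ × ℝ → Matrix (Fin N) (Fin m) ℂ)
    (hsmooth : ContDiff ℝ (⊤ : ℕ∞) X)
    (hX : ∀ x, (X x)ᴴ * X x = 1)
    (P : ℝ × ℝ → Matrix (Fin N) (Fin N) ℂ)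
    (hP : ∀ x, P x = 1 - X x * (X x)ᴴ)
    (hEL : ∀ x, pL (pR P) x * P x - P x * pL (pR P) x = 0) :
    (∀ x, pR (fun y => Matrix.trace (pL X y * (pL X y)ᴴ * P y)) x = 0) ∧
    (∀ x, pL (fun y => Matrix.trace (pR X y * (pR X y)ᴴ * P y)) x = 0) := by
  have hPsmooth : ContDiff ℝ (⊤ : ℕ∞) P := by
    rw [funext hP]; exact contDiff_const.sub (hsmooth.matmul hsmooth.ct)
  have hEL' : ∀ x, fderiv ℝ (fun y => fderiv ℝ P y (0, 1)) x (1, 0) * P x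
      = P x * fderiv ℝ (fun y => fderiv ℝ P y (0, 1)) x (1, 0) := by
    intro x
    have := hEL x
    simp only [pL, pR] at this
    exact sub_eq_zero.mp this
  have hEL'' : ∀ x, fderiv ℝ (fun y => fderiv ℝ P y (1, 0)) x (0, 1) * P x
      = P x * fderiv ℝ (fun y => fderiv ℝ P y (1, 0)) x (0, 1) := by
    intro x
    erw [fderiv_swap hPsmooth x (1, 0) (0, 1)]
    exact hEL' x
  constructor
  · intro x
    simp only [pL, pR]
    exact conserved X hsmooth hX P hP (1, 0) (0, 1) hEL'' x
  · intro x
    simp only [pL, pR]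
    exact conserved X hsmooth hX P hP (0, 1) (1, 0) hEL' x
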